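/- Let G be an (e,d)-depth-robust DAG. Then the cumulative complexity of parallel pebbling of G satisfies Π_cc^||(G) > e·d. -/

import Mathlib

/-- The rank of bit `i` in the binary word `B`: the number of indices `j < i`
with `B j = B i`. -/
def wordRank (B : ℕ → Bool) (i : ℕ) : ℕ :=
  ((Finset.range i).filter fun j => B j = B i).card

/-- The Hamming weight of a binary word of length `n`. -/
def hammingWeight (n : ℕ) (B : ℕ → Bool) : ℕ :=
  ((Finset.range n).filter fun j => B j = true).card

/-- The bitwise complement of a binary word. -/
def wordCompl (B : ℕ → Bool) : ℕ → Bool := fun i => !(B i)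

/-- The Riffle-Permutation induced by a binary word `B` of length `n`:
`π_B i = r_B i` if `B i = 0` and `π_B i = r_B i + HW(B̄)` if `B i = 1`. -/
def rifflePerm (n : ℕ) (B : ℕ → Bool) (i : ℕ) : ℕ :=
  if B i = true then wordRank B i + hammingWeight n (wordCompl B) else wordRank B i

/-- The binary word obtained by rearranging the entries of `X` (of length `n`)
according to the permutation `P`: the entry at position `p` is moved to position `P p`. -/
def permWord (n : ℕ) (P : ℕ → ℕ) (X : ℕ → Bool) : ℕ → Bool :=
  fun q => decide (∃ p, p < n ∧ P p = q ∧ X p = true)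

/-- The binary-representation matrix of `σ` (a permutation of `{0,…,2^g-1}`):
the `j`-th row is the `g`-bit binary representation of `σ j` (most significant bit first),
and `binRep g σ i j` is the entry in column `i`, row `j`. -/
def binRep (g : ℕ) (σ : ℕ → ℕ) : ℕ → ℕ → Bool :=
  fun i j => Nat.testBit (σ j) (g - 1 - i)

/-- `TraceTrajectories`: `𝔅_0 = B_0` and `𝔅_i = π_{𝔅_{i-1}}(B_i)`. -/
def traceTraj (g : ℕ) (B : ℕ → ℕ → Bool) : ℕ → ℕ → Bool
  | 0 => B 0
  | i + 1 => permWord (2 ^ g) (rifflePerm (2 ^ g) (traceTraj g B i)) (B (i + 1))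

/-- The position, after `i` rounds, of the trajectory started at input `j`,
where round `i` applies the Riffle-Permutation induced by the word `W i`. -/
def trajPos (g : ℕ) (W : ℕ → ℕ → Bool) (j : ℕ) : ℕ → ℕ
  | 0 => j
  | i + 1 => rifflePerm (2 ^ g) (W i) (trajPos g W j i)

/-- Sequential (horizontal and wrap-around) edges of the `2^g`-Double-Riffle-Graph,
on vertices `(i, j)` representing `v_i^j`. -/
def drgSeqEdge (g : ℕ) (u v : ℕ × ℕ) : Prop :=
  (v.2 = u.2 ∧ u.2 ≤ 2 * g ∧ v.1 = u.1 + 1 ∧ v.1 < 2 ^ g) ∨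
  (u.1 = 2 ^ g - 1 ∧ v.1 = 0 ∧ v.2 = u.2 + 1 ∧ u.2 < 2 * g)

/-- Permutation edges of the `2^g`-Double-Riffle-Graph built from the binary words
`Bs 1, …, Bs g` (of length `2^g` each): the upper-layer edges
`v_i^{j-1} → v_{π_{B_j}(i)}^j` and `v_i^{j-1} → v_{π_{B̄_j}(i)}^j` for `1 ≤ j ≤ g`, and
the mirrored lower-layer edges `v_{π_{B_j}^{-1}(i)}^{2g-j} → v_i^{2g-j+1}` and
`v_i^{2g-j} → v_{π_{B_j}^{-1}(i)}^{2g-j+1}` (phrased via `π_{B_j}` directly). -/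
def drgPermEdge (g : ℕ) (Bs : ℕ → ℕ → Bool) (u v : ℕ × ℕ) : Prop :=
  u.1 < 2 ^ g ∧ v.1 < 2 ^ g ∧
  ((∃ j, 1 ≤ j ∧ j ≤ g ∧ u.2 = j - 1 ∧ v.2 = j ∧
      (v.1 = rifflePerm (2 ^ g) (Bs j) u.1 ∨ v.1 = rifflePerm (2 ^ g) (wordCompl (Bs j)) u.1)) ∨
   (∃ j, 1 ≤ j ∧ j ≤ g ∧ u.2 = 2 * g - j ∧ v.2 = 2 * g - j + 1 ∧
      (rifflePerm (2 ^ g) (Bs j) u.1 = v.1 ∨ rifflePerm (2 ^ g) (Bs j) v.1 = u.1)))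

/-- The edge relation of the `2^g`-Double-Riffle-Graph built from words `Bs 1, …, Bs g`. -/
def drgEdge (g : ℕ) (Bs : ℕ → ℕ → Bool) (u v : ℕ × ℕ) : Prop :=
  drgSeqEdge g u v ∨ drgPermEdge g Bs u v

/-- The words `B_j := 𝔅_{j-1}` (for `1 ≤ j ≤ g`) used for the Double-Riffle-Graph built
from the columns of `TraceTrajectories` of the binary representation of `σ`. -/
def drgWords (g : ℕ) (σ : ℕ → ℕ) : ℕ → ℕ → Bool :=
  fun j => traceTraj g (binRep g σ) (j - 1)

/-- Vertex set of the `2^g`-Double-Riffle-Graph. -/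
def drgVerts (g : ℕ) : Finset (ℕ × ℕ) :=
  Finset.range (2 ^ g) ×ˢ Finset.range (2 * g + 1)

/-- Input vertices `v_i^0`. -/
def drgInputs (g : ℕ) : Finset (ℕ × ℕ) := (Finset.range (2 ^ g)).image fun i => (i, 0)

/-- Output vertices `v_i^{2g}`. -/
def drgOutputs (g : ℕ) : Finset (ℕ × ℕ) := (Finset.range (2 ^ g)).image fun i => (i, 2 * g)

/-- The `(2^g, lam)`-Double-Riffle-Graph: `lam` stacked `2^g`-Double-Riffle-Graphs,
the `m`-th copy (built from the permutation `σs m`) occupying layers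
`2*g*m, …, 2*g*(m+1)`, outputs of each copy identified with inputs of the next. -/
def rsgEdge (g lam : ℕ) (σs : ℕ → ℕ → ℕ) (u v : ℕ × ℕ) : Prop :=
  ∃ m, m < lam ∧ 2 * g * m ≤ u.2 ∧ 2 * g * m ≤ v.2 ∧
    drgEdge g (drgWords g (σs m)) (u.1, u.2 - 2 * g * m) (v.1, v.2 - 2 * g * m)

/-- Vertex set of the `(2^g, lam)`-Double-Riffle-Graph. -/
def rsgVerts (g lam : ℕ) : Finset (ℕ × ℕ) :=
  Finset.range (2 ^ g) ×ˢ Finset.range (2 * g * lam + 1)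

/-- The row of `2^g` vertices in layer `j`. -/
def rsgRow (g j : ℕ) : Finset (ℕ × ℕ) := (Finset.range (2 ^ g)).image fun i => (i, j)

/-- `k` vertex-disjoint directed paths connecting `S` to `T`. -/
def HasDisjointPaths {V : Type*} (E : V → V → Prop) (S T : Set V) (k : ℕ) : Prop :=
  ∃ f : Fin k → List V,
    (∀ a, (f a).Chain' E ∧ ∃ h : f a ≠ [], (f a).head h ∈ S ∧ (f a).getLast h ∈ T) ∧
    ∀ a b, a ≠ b → ∀ x ∈ f a, x ∉ f b

/-- `N`-Superconcentrator with designated inputs and outputs. -/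
def IsSuperconcentratorOn {V : Type*} (E : V → V → Prop) (inp out : Finset V) (N : ℕ) : Prop :=
  inp.card = N ∧ out.card = N ∧
    ∀ k, 1 ≤ k → k ≤ N → ∀ S ⊆ inp, ∀ T ⊆ out, S.card = k → T.card = k →
      HasDisjointPaths E (↑S) (↑T) k

/-- `(N, lam)`-Superconcentrator: `lam` stacked `N`-Superconcentrators, the outputs of each
copy identified with the inputs of the next one. -/
def IsStackedSuperconcentrator {V : Type*} (E : V → V → Prop) (verts : Finset V)
    (N lam : ℕ) (inp out : Finset V) : Prop :=
  ∃ (Pt : ℕ → Finset V) (W : ℕ → Finset V),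
    W 0 = inp ∧ W lam = out ∧
    (∀ i ≤ lam, W i ⊆ verts ∧ (W i).card = N) ∧
    (∀ i < lam, Pt i ⊆ verts ∧ W i ⊆ Pt i ∧ W (i + 1) ⊆ Pt i) ∧
    (∀ x ∈ verts, ∃ i < lam, x ∈ Pt i) ∧
    (∀ i < lam, ∀ j < lam, i < j → ∀ x, x ∈ Pt i → x ∈ Pt j → j = i + 1 ∧ x ∈ W j) ∧
    (∀ u v, E u v → u ∈ verts ∧ v ∈ verts ∧ ∃ i < lam, u ∈ Pt i ∧ v ∈ Pt i) ∧
    (∀ i < lam,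
      IsSuperconcentratorOn (fun u v => E u v ∧ u ∈ Pt i ∧ v ∈ Pt i) (W i) (W (i + 1)) N)

/-- A legal sequential pebbling of the graph `(verts, E)` with target set `Tset`,
given as a sequence of configurations `P 0, …, P t`. -/
def IsSeqPebbling {V : Type*} [DecidableEq V] (E : V → V → Prop) (verts Tset : Finset V)
    (P : ℕ → Finset V) (t : ℕ) : Prop :=
  P 0 = ∅ ∧ (∀ i ≤ t, P i ⊆ verts) ∧
    (∀ x ∈ Tset, ∃ z ≤ t, x ∈ P z) ∧
    (∀ i, 1 ≤ i → i ≤ t → ∀ x ∈ P i \ P (i - 1), ∀ u ∈ verts, E u x → u ∈ P (i - 1)) ∧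
    (∀ i, 1 ≤ i → i ≤ t → (P i \ P (i - 1)).card ≤ 1)

/-- A legal parallel pebbling of the graph `(verts, E)` with target set `Tset`. -/
def IsParPebbling {V : Type*} [DecidableEq V] (E : V → V → Prop) (verts Tset : Finset V)
    (P : ℕ → Finset V) (t : ℕ) : Prop :=
  P 0 = ∅ ∧ (∀ i ≤ t, P i ⊆ verts) ∧
    (∀ x ∈ Tset, ∃ z ≤ t, x ∈ P z) ∧
    (∀ i, 1 ≤ i → i ≤ t → ∀ x ∈ P i \ P (i - 1), ∀ u ∈ verts, E u x → u ∈ P (i - 1))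

/-- The space used by a pebbling: the maximal number of pebbles on the graph. -/
def pebSpace {V : Type*} (P : ℕ → Finset V) (t : ℕ) : ℕ :=
  (Finset.range (t + 1)).sup fun i => (P i).card

/-- The number of pebble placements made by a pebbling. -/
def pebPlacements {V : Type*} [DecidableEq V] (P : ℕ → Finset V) (t : ℕ) : ℕ :=
  ∑ i ∈ Finset.range t, (P (i + 1) \ P i).card

/-- The cumulative complexity of a pebbling. -/
def pebCC {V : Type*} (P : ℕ → Finset V) (t : ℕ) : ℕ :=
  ∑ i ∈ Finset.range (t + 1), (P i).card

/-- `(e, d)`-depth-robustness: after removing any set `S` of at most `e` nodes, the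
remaining graph contains a directed path of length at least `d` (length counted as the
number of nodes on the path). -/
def IsDepthRobust {V : Type*} (E : V → V → Prop) (verts : Finset V) (e d : ℕ) : Prop :=
  ∀ S : Finset V, S ⊆ verts → S.card ≤ e →
    ∃ p : List V, p ≠ [] ∧ p.Chain' E ∧ (∀ x ∈ p, x ∈ verts ∧ x ∉ S) ∧ d ≤ p.length

/-!
Sort the time steps by their residue mod `d`. If the cumulative complexity were at most `e·d`,
some residue class `a` would carry at most `e` pebbles in total; call the set of nodes they
sit on `S`. Depth-robustness gives a path of `d` nodes avoiding `S`. In a DAG every node is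
eventually pebbled, in particular the last node of that path, say at time `z`. Walking back
in time, at each of the `d` steps `z, z - 1, …, z - d + 1` some node of the path carries a
pebble (a node newly placed at time `s` needs its predecessor at time `s - 1`). One of these
steps is `≡ a (mod d)`, so that node lies in `S`: a contradiction.
-/

theorem IsDepthRobust.max_one {V : Type*} {E : V → V → Prop} {verts : Finset V} {e d : ℕ}
    (hdr : IsDepthRobust E verts e d) : IsDepthRobust E verts e (max d 1) := by
  intro S hS hcard
  obtain ⟨p, hp, hchain, hmem, hlen⟩ := hdr S hS hcard
  exact ⟨p, hp, hchain, hmem, max_le hlen (List.length_pos_of_ne_nil hp)⟩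

lemma exists_lt_sub_mod_eq {a d z : ℕ} (ha : a < d) (hz : a ≤ z) :
    ∃ j < d, (z - j) % d = a := by
  refine ⟨(z - a) % d, Nat.mod_lt _ (by omega), ?_⟩
  have h := Nat.mod_add_div (z - a) d
  rw [show z - (z - a) % d = a + d * ((z - a) / d) by omega, Nat.add_mul_mod_self_left,
    Nat.mod_eq_of_lt ha]

lemma exists_card_biUnion_mod_eq_le {V : Type*} [DecidableEq V] (P : ℕ → Finset V)
    {t e d : ℕ} (hd : 0 < d) (hcc : pebCC P t ≤ e * d) :
    ∃ a < d, (((Finset.range (t + 1)).filter (· % d = a)).biUnion P).card ≤ e := by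
  obtain ⟨a, ha, hsum⟩ := Finset.exists_sum_fiber_le_of_maps_to_of_sum_le_nsmul
    (w := fun i => (P i).card) (b := e)
    (fun i _ => Finset.mem_range.mpr (Nat.mod_lt i hd)) (Finset.nonempty_range_iff.mpr hd.ne')
    (by simpa [pebCC, mul_comm] using hcc)
  exact ⟨a, Finset.mem_range.mp ha, Finset.card_biUnion_le.trans hsum⟩

namespace IsParPebbling

variable {V : Type*} [DecidableEq V] {E : V → V → Prop} {verts Tset : Finset V}
  {P : ℕ → Finset V} {t : ℕ}

lemma exists_mem_of_edge (hpeb : IsParPebbling E verts Tset P t) {u v : V} (hu : u ∈ verts)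
    (huv : E u v) {z : ℕ} (hz : z ≤ t) (hv : v ∈ P z) : ∃ z' ≤ t, u ∈ P z' := by
  induction z with
  | zero => simp [hpeb.1] at hv
  | succ z ih =>
    by_cases hprev : v ∈ P z
    · exact ih (by omega) hprev
    · exact ⟨z, by omega, hpeb.2.2.2 (z + 1) (by omega) hz v
        (Finset.mem_sdiff.mpr ⟨hv, hprev⟩) u hu huv⟩

lemma exists_mem_of_mem_verts (hpeb : IsParPebbling E verts Tset P t) {topo : V → ℕ}
    (htopo : ∀ u v, E u v → topo u < topo v)
    (hsinks : ∀ x ∈ verts, (∀ u ∈ verts, ¬ E x u) → x ∈ Tset) :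
    ∀ v ∈ verts, ∃ z ≤ t, v ∈ P z := by
  by_contra! h
  set U := verts.filter fun v => ∀ z ≤ t, v ∉ P z
  obtain ⟨v, hvU, hmax⟩ := U.exists_max_image topo <| by
    obtain ⟨v, hv, hvP⟩ := h
    exact ⟨v, Finset.mem_filter.mpr ⟨hv, hvP⟩⟩
  obtain ⟨hv, hvP⟩ := Finset.mem_filter.mp hvU
  by_cases hsink : ∀ u ∈ verts, ¬ E v u
  · obtain ⟨z, hz, hvz⟩ := hpeb.2.2.1 v (hsinks v hv hsink)
    exact hvP z hz hvz
  · push Not at hsink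
    obtain ⟨u, hu, hvu⟩ := hsink
    have huU : u ∉ U := fun huU => (hmax u huU).not_gt (htopo v u hvu)
    obtain ⟨z, hz, huz⟩ : ∃ z ≤ t, u ∈ P z := by simpa [U, hu] using huU
    obtain ⟨z', hz', hvz'⟩ := hpeb.exists_mem_of_edge hv hvu hz huz
    exact hvP z' hz' hvz'

lemma exists_mem_path_of_mem (hpeb : IsParPebbling E verts Tset P t) {l : List V}
    (hchain : l.IsChain E) (hverts : ∀ x ∈ l, x ∈ verts) {k z : ℕ} (hk : k < l.length)
    (hz : z ≤ t) (hkz : l[k] ∈ P z) :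
    ∀ j ≤ k, ∃ q, ∃ hq : q < l.length, k - j ≤ q ∧ l[q] ∈ P (z - j) := by
  intro j
  induction j with
  | zero => exact fun _ => ⟨k, hk, le_rfl, hkz⟩
  | succ j ih =>
    intro hj
    obtain ⟨q, hq, hkq, hqP⟩ := ih (by omega)
    by_cases hprev : l[q] ∈ P (z - (j + 1))
    · exact ⟨q, hq, by omega, hprev⟩
    obtain ⟨q, rfl⟩ : ∃ q', q = q' + 1 := ⟨q - 1, by omega⟩
    have hzj : z - j - 1 = z - (j + 1) := by omega
    have hplaced : l[q + 1] ∈ P (z - j) \ P (z - j - 1) :=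
      Finset.mem_sdiff.mpr ⟨hqP, hzj ▸ hprev⟩
    have hstep : 1 ≤ z - j := by
      by_contra! h0
      exact hprev (by rwa [show z - (j + 1) = z - j by omega])
    exact ⟨q, by omega, by omega, hzj ▸ hpeb.2.2.2 (z - j) hstep (by omega) _ hplaced _
      (hverts _ (List.getElem_mem _)) (List.isChain_iff_getElem.mp hchain q hq)⟩

lemma mul_lt_pebCC (hpeb : IsParPebbling E verts Tset P t) {e d : ℕ} (hd : 0 < d)
    (hdr : IsDepthRobust E verts e d) (hall : ∀ v ∈ verts, ∃ z ≤ t, v ∈ P z) :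
    e * d < pebCC P t := by
  by_contra! hcc
  obtain ⟨a, had, hS⟩ := exists_card_biUnion_mod_eq_le P hd hcc
  set S := ((Finset.range (t + 1)).filter (· % d = a)).biUnion P
  have hSverts : S ⊆ verts := by
    intro x hx
    obtain ⟨i, hi, hxi⟩ := Finset.mem_biUnion.mp hx
    exact hpeb.2.1 i (by simp at hi; omega) hxi
  obtain ⟨p, -, hchain, hp, hlen⟩ := hdr S hSverts hS
  have hk : d - 1 < p.length := by omega
  obtain ⟨z, hz, hlast⟩ := hall _ (hp _ (List.getElem_mem hk)).1
  have hdesc := hpeb.exists_mem_path_of_mem hchain (fun x hx => (hp x hx).1) hk hz hlast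
  have hdz : d - 1 ≤ z := by
    by_contra! hzd
    obtain ⟨q, hq, -, hqP⟩ := hdesc (d - 1) le_rfl
    simp [Nat.sub_eq_zero_of_le hzd.le, hpeb.1] at hqP
  obtain ⟨j, hjd, hmod⟩ := exists_lt_sub_mod_eq had (by omega : a ≤ z)
  obtain ⟨q, hq, -, hqP⟩ := hdesc j (by omega)
  exact (hp _ (List.getElem_mem hq)).2 <| Finset.mem_biUnion.mpr
    ⟨z - j, Finset.mem_filter.mpr ⟨Finset.mem_range.mpr (by omega), hmod⟩, hqP⟩

end IsParPebbling

/-- Let `G` be an `(e, d)`-depth-robust DAG. Then the cumulative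
complexity of parallel pebbling of `G` satisfies `Π_cc^∥(G) > e·d`: every legal parallel
pebbling of `G` with target set its sinks has cumulative complexity greater than
`e·d`. -/
theorem depth_robust_parallel_cc_lower_bound {V : Type*} [DecidableEq V]
    (E : V → V → Prop) (verts : Finset V)
    (topo : V → ℕ) (htopo : ∀ u v, E u v → topo u < topo v)  -- G is acyclic
    (e d : ℕ) (hdr : IsDepthRobust E verts e d)
    (Tset : Finset V)
    (hT : ∀ x, x ∈ Tset ↔ x ∈ verts ∧ ∀ u ∈ verts, ¬ E x u)   -- targets are the sinks
    (P : ℕ → Finset V) (t : ℕ) (hpeb : IsParPebbling E verts Tset P t) :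
    e * d < pebCC P t := by
  have hall := hpeb.exists_mem_of_mem_verts htopo fun x hx hsink => (hT x).mpr ⟨hx, hsink⟩
  calc e * d ≤ e * max d 1 := Nat.mul_le_mul_left e (le_max_left d 1)
    _ < pebCC P t := hpeb.mul_lt_pebCC (by omega) hdr.max_one hall
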